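/- arXiv:1008.5259 — 8 statements merged into one kernel-verified Lean document; each statement's English description precedes it below -/
import Mathlib

section
/- Every cylinder circumscribed to the four vertices of the regular tetrahedron v₁=(1,1,1), v₂=(1,−1,−1), v₃=(−1,1,−1), v₄=(−1,−1,1) has radius ρ ≥ √2, and there exists a circumscribed cylinder of radius exactly √2. (Since the edge length is 2√2, the ratio of the minimal circumscribed-cylinder radius to the edge length is 1/2.) -/
/-! The vertices `vᵢ` sum to zero and form a tight frame: `∑ ⟪vᵢ, u⟫² = 4‖u‖²`. Summing the squared
distances to a line with unit direction `u` through `c`, the cross terms cancel and one gets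
`∑ (‖vᵢ‖² - ⟪vᵢ, u⟫²) + 4 d² = 12 - 4 + 4 d²`, where `d` is the distance from the centroid to
the line. So a line at distance `ρ` from all four vertices has `4ρ² ≥ 8`; a coordinate axis attains
`ρ = √2`. -/

/-- The four vertices of the regular tetrahedron of edge length `2√2`
centered at the origin. -/
noncomputable def tetra : Fin 4 → EuclideanSpace ℝ (Fin 3) := fun i =>
  (WithLp.equiv 2 (Fin 3 → ℝ)).symm
    (![![1, 1, 1], ![1, -1, -1], ![-1, 1, -1], ![-1, -1, 1]] i)

open Finset
open scoped RealInnerProductSpace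

section

variable {E : Type*} [NormedAddCommGroup E] [InnerProductSpace ℝ E]

/-- For `‖u‖ = 1`, the squared distance from `x` to the line `c + ℝ u`. -/
def sqDistToLine (c u x : E) : ℝ := ‖x - c‖ ^ 2 - inner ℝ (x - c) u ^ 2

theorem sqDistToLine_nonneg {u : E} (hu : ‖u‖ ≤ 1) (c x : E) : 0 ≤ sqDistToLine c u x := by
  have h : |⟪x - c, u⟫| ≤ ‖x - c‖ :=
    (abs_real_inner_le_norm _ _).trans (mul_le_of_le_one_right (norm_nonneg _) hu)
  rw [sqDistToLine, sub_nonneg, ← sq_abs]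
  exact pow_le_pow_left₀ (abs_nonneg _) h 2

theorem sqDistToLine_eq_sqDistToLine_zero (c u x : E) :
    sqDistToLine c u x =
      sqDistToLine 0 u x - 2 * ⟪x, c - ⟪c, u⟫ • u⟫ + sqDistToLine 0 u c := by
  simp only [sqDistToLine, sub_zero, norm_sub_sq_real, inner_sub_left, inner_sub_right,
    real_inner_smul_right]
  ring

theorem sum_sqDistToLine_of_sum_eq_zero {ι : Type*} [Fintype ι] {x : ι → E}
    (hx : ∑ i, x i = 0) (c u : E) :
    ∑ i, sqDistToLine c u (x i) =
      ∑ i, sqDistToLine 0 u (x i) + Fintype.card ι * sqDistToLine 0 u c := by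
  rw [sum_congr rfl fun i _ => sqDistToLine_eq_sqDistToLine_zero c u (x i)]
  simp only [sum_add_distrib, sum_sub_distrib, ← mul_sum, ← sum_inner, hx, inner_zero_left,
    sum_const, card_univ, nsmul_eq_mul]
  ring

theorem sum_sqDistToLine_le_card_mul {ι : Type*} [Fintype ι] {x : ι → E} (hx : ∑ i, x i = 0)
    {c u : E} (hu : ‖u‖ ≤ 1) {r : ℝ} (h : ∀ i, sqDistToLine c u (x i) = r) :
    ∑ i, sqDistToLine 0 u (x i) ≤ Fintype.card ι * r := by
  have hsum := sum_sqDistToLine_of_sum_eq_zero hx c u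
  simp only [h, sum_const, card_univ, nsmul_eq_mul] at hsum
  rw [hsum]
  exact le_add_of_nonneg_right (mul_nonneg (Nat.cast_nonneg _) (sqDistToLine_nonneg hu 0 c))

end

theorem tetra_apply (i : Fin 4) (k : Fin 3) :
    tetra i k = ![![1, 1, 1], ![1, -1, -1], ![-1, 1, -1], ![-1, -1, 1]] i k := rfl

theorem sum_tetra : ∑ i, tetra i = 0 := by
  ext k
  fin_cases k <;> simp [Fin.sum_univ_four, tetra_apply, Matrix.cons_val]

theorem norm_tetra_sq (i : Fin 4) : ‖tetra i‖ ^ 2 = 3 := by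
  rw [EuclideanSpace.real_norm_sq_eq, Fin.sum_univ_three]
  fin_cases i <;> simp [tetra_apply, Matrix.cons_val] <;> norm_num

theorem sum_inner_tetra_sq (u : EuclideanSpace ℝ (Fin 3)) :
    ∑ i, ⟪tetra i, u⟫ ^ 2 = 4 * ‖u‖ ^ 2 := by
  simp [EuclideanSpace.real_norm_sq_eq, PiLp.inner_apply, Fin.sum_univ_four, Fin.sum_univ_three,
    tetra_apply]
  ring

theorem sum_sqDistToLine_zero_tetra {u : EuclideanSpace ℝ (Fin 3)} (hu : ‖u‖ = 1) :
    ∑ i, sqDistToLine 0 u (tetra i) = 8 := by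
  simp only [sqDistToLine, sub_zero, sum_sub_distrib, norm_tetra_sq, sum_const, card_univ,
    Fintype.card_fin, sum_inner_tetra_sq, hu]
  norm_num

theorem sqDistToLine_tetra_single_zero (i : Fin 4) :
    sqDistToLine 0 (EuclideanSpace.single 0 1) (tetra i) = 2 := by
  rw [sqDistToLine, sub_zero, norm_tetra_sq, EuclideanSpace.inner_single_right]
  fin_cases i <;> norm_num [tetra_apply, Matrix.cons_val]

/-- Every cylinder circumscribed to the regular tetrahedron has radius `ρ ≥ √2`,
and there is a circumscribed cylinder of radius exactly `√2`. -/
theorem min_radius_circumscribed_cylinder_tetrahedron :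
    (∀ (u c : EuclideanSpace ℝ (Fin 3)) (ρ : ℝ), ‖u‖ = 1 → 0 ≤ ρ →
        (∀ i : Fin 4, ‖tetra i - c‖ ^ 2 - (inner ℝ (tetra i - c) u : ℝ) ^ 2 = ρ ^ 2) →
        Real.sqrt 2 ≤ ρ) ∧
    (∃ (u c : EuclideanSpace ℝ (Fin 3)), ‖u‖ = 1 ∧
        ∀ i : Fin 4, ‖tetra i - c‖ ^ 2 - (inner ℝ (tetra i - c) u : ℝ) ^ 2
          = Real.sqrt 2 ^ 2) := by
  constructor
  · intro u c ρ hu hρ h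
    have hle : 8 ≤ 4 * ρ ^ 2 := by
      simpa [sum_sqDistToLine_zero_tetra hu] using sum_sqDistToLine_le_card_mul sum_tetra hu.le h
    rw [Real.sqrt_le_left hρ]
    linarith
  · refine ⟨EuclideanSpace.single 0 1, 0, by simp, fun i => ?_⟩
    rw [Real.sq_sqrt zero_le_two]
    exact sqDistToLine_tetra_single_zero i
end

section
/- Let u be a unit vector, c ∈ ℝ³ with ⟨c,u⟩ = 0, and ρ ≥ 0 such that the cylinder (u,c,ρ) is circumscribed to the four vertices v₁,…,v₄ of the regular tetrahedron. Then ρ = √2 if and only if c = 0 and u ∈ {±e₁, ±e₂, ±e₃} (the standard basis vectors and their opposites). In particular there are exactly three minimal-radius circumscribed cylinders; their axes pass through the center of the tetrahedron and are mutually orthogonal. -/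
/-!
Subtracting the circumscription equations of the four vertices with the sign patterns of the
coordinate axes forces the axis point to be `c = -(u₁u₂, u₀u₂, u₀u₁)`, and adding all four
gives `ρ² = 2 + ‖c‖²`. Hence `ρ = √2` exactly when `c = 0`, i.e. when the coordinates of the
unit vector `u` have pairwise vanishing products, which means `u = ±eⱼ`.
-/

open Real

theorem EuclideanSpace.exists_eq_single_or_eq_neg_single_of_mul_eq_zero {ι : Type*}
    [Fintype ι] [DecidableEq ι] {u : EuclideanSpace ℝ ι} (hu : ‖u‖ = 1)
    (h : Pairwise fun i j => u i * u j = 0) :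
    ∃ j, u = EuclideanSpace.single j 1 ∨ u = -EuclideanSpace.single j 1 := by
  obtain ⟨j, hj⟩ : ∃ j, u j ≠ 0 := by
    by_contra! h0
    have : u = 0 := by ext i; exact h0 i
    simp [this] at hu
  have hu_single : u = EuclideanSpace.single j (u j) := by
    ext k
    rcases eq_or_ne k j with rfl | hk
    · simp
    · simpa [hk, hj] using h hk
  have habs : |u j| = 1 := by rwa [hu_single, PiLp.norm_single, Real.norm_eq_abs] at hu
  refine ⟨j, ?_⟩
  rcases abs_eq (zero_le_one' ℝ) |>.mp habs with h1 | h1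
  · exact .inl (h1 ▸ hu_single)
  · exact .inr (by rw [hu_single, h1, ← PiLp.single_neg])

theorem EuclideanSpace.sq_norm_sub_sub_sq_inner_fin_three (y c u : EuclideanSpace ℝ (Fin 3)) :
    ‖y - c‖ ^ 2 - (inner ℝ (y - c) u) ^ 2 =
      (y 0 - c 0) ^ 2 + (y 1 - c 1) ^ 2 + (y 2 - c 2) ^ 2
        - ((y 0 - c 0) * u 0 + (y 1 - c 1) * u 1 + (y 2 - c 2) * u 2) ^ 2 := by
  simp only [EuclideanSpace.real_norm_sq_eq, PiLp.inner_apply, RCLike.inner_apply,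
    conj_trivial, Fin.sum_univ_three, PiLp.sub_apply]
  ring

theorem tetra_circumscribed_axis_point_and_radius {u c : EuclideanSpace ℝ (Fin 3)} {ρ : ℝ}
    (hu : ‖u‖ = 1) (hcu : inner ℝ c u = (0 : ℝ))
    (hcirc : ∀ i, ‖tetra i - c‖ ^ 2 - (inner ℝ (tetra i - c) u : ℝ) ^ 2 = ρ ^ 2) :
    c 0 = -(u 1 * u 2) ∧ c 1 = -(u 0 * u 2) ∧ c 2 = -(u 0 * u 1) ∧ ρ ^ 2 = 2 + ‖c‖ ^ 2 := by
  have hu2 : 1 = u 0 ^ 2 + u 1 ^ 2 + u 2 ^ 2 := by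
    simpa [Fin.sum_univ_three, hu] using EuclideanSpace.real_norm_sq_eq u
  have hcu' : u 0 * c 0 + u 1 * c 1 + u 2 * c 2 = 0 := by
    simpa [PiLp.inner_apply, Fin.sum_univ_three] using hcu
  have hvertex i :=
    (EuclideanSpace.sq_norm_sub_sub_sq_inner_fin_three (tetra i) c u).symm.trans (hcirc i)
  have h1 := hvertex 0
  have h2 := hvertex 1
  have h3 := hvertex 2
  have h4 := hvertex 3
  simp only [tetra, WithLp.equiv_symm_apply, Matrix.cons_val_zero, Matrix.cons_val_one,
    Matrix.cons_val] at h1 h2 h3 h4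
  rw [EuclideanSpace.real_norm_sq_eq, Fin.sum_univ_three]
  refine ⟨?_, ?_, ?_, ?_⟩
  · linear_combination -(h1 + h2 - h3 - h4) / 8 + u 0 * hcu'
  · linear_combination -(h1 - h2 + h3 - h4) / 8 + u 1 * hcu'
  · linear_combination -(h1 - h2 - h3 + h4) / 8 + u 2 * hcu'
  · linear_combination
      -(h1 + h2 + h3 + h4) / 4 + hu2 - (u 0 * c 0 + u 1 * c 1 + u 2 * c 2) * hcu'

/-- For a cylinder circumscribed to the regular tetrahedron (with axis point `c`
orthogonal to the unit axis direction `u`), the radius equals `√2` iff `c = 0` and `u` is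
one of the six standard basis vectors and their opposites.  In particular there are exactly
three minimal-radius circumscribed cylinders, whose axes pass through the center of the
tetrahedron and are mutually orthogonal. -/
theorem min_cylinders_tetrahedron_characterization
    (u c : EuclideanSpace ℝ (Fin 3)) (ρ : ℝ)
    (hu : ‖u‖ = 1) (hcu : (inner ℝ c u : ℝ) = 0) (hρ : 0 ≤ ρ)
    (hcirc : ∀ i : Fin 4, ‖tetra i - c‖ ^ 2 - (inner ℝ (tetra i - c) u : ℝ) ^ 2 = ρ ^ 2) :
    ρ = Real.sqrt 2 ↔
      (c = 0 ∧ ∃ j : Fin 3,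
        u = EuclideanSpace.single j 1 ∨ u = -EuclideanSpace.single j 1) := by
  obtain ⟨hc0, hc1, hc2, hρc⟩ := tetra_circumscribed_axis_point_and_radius hu hcu hcirc
  constructor
  · rintro rfl
    have hc : c = 0 := by
      rw [sq_sqrt zero_le_two] at hρc
      simpa using hρc
    refine ⟨hc, EuclideanSpace.exists_eq_single_or_eq_neg_single_of_mul_eq_zero hu ?_⟩
    simp only [hc, PiLp.zero_apply, zero_eq_neg] at hc0 hc1 hc2
    intro i j hij
    fin_cases i <;> fin_cases j <;>
      first
      | exact absurd rfl hij
      | simp only [Fin.zero_eta, Fin.mk_one, Fin.reduceFinMk]; linarith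
  · rintro ⟨rfl, -⟩
    rw [← sqrt_sq hρ, hρc, norm_zero]
    norm_num
end

section
/- Every cylinder circumscribed to the four vertices of the regular tetrahedron v₁=(1,1,1), v₂=(1,−1,−1), v₃=(−1,1,−1), v₄=(−1,−1,1) has radius ρ ≤ 3/2, and there exists a circumscribed cylinder of radius exactly 3/2. (Since the edge length is 2√2, the ratio of the maximal circumscribed-cylinder radius to the edge length is 3√2/8.) -/
/-! Write `s = ⟪c, u⟫`. Subtracting the cylinder equations of two vertices leaves equations
linear in `c`, which force `c = s • u - (u₁u₂, u₀u₂, u₀u₁)`; pairing this with `u` gives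
`u₀u₁u₂ = 0`. Averaging the four equations, since the vertices have centroid `0` and
`∑ vᵢ vᵢᵀ = 4 I`, gives `ρ² = 2 + ‖c‖² - s²`, which the formula for `c` turns into
`ρ² = 2 + u₀²u₁² + u₀²u₂² + u₁²u₂²`. As one coordinate of `u` vanishes, this is `2 + x²y²`
with `x² + y² = 1`, hence at most `2 + 1/4`. -/

open RealInnerProductSpace

lemma EuclideanSpace.inner_fin_three (x y : EuclideanSpace ℝ (Fin 3)) :
    ⟪x, y⟫ = x 0 * y 0 + x 1 * y 1 + x 2 * y 2 := by
  simp [PiLp.inner_apply, Fin.sum_univ_three]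
  ring

lemma EuclideanSpace.norm_sq_fin_three (x : EuclideanSpace ℝ (Fin 3)) :
    ‖x‖ ^ 2 = x 0 ^ 2 + x 1 ^ 2 + x 2 ^ 2 := by
  rw [← real_inner_self_eq_norm_sq, inner_fin_three]; ring

def OnCylinder {E : Type*} [NormedAddCommGroup E] [InnerProductSpace ℝ E] (c u : E) (ρ : ℝ)
    (y : E) : Prop :=
  ‖y - c‖ ^ 2 - ⟪y - c, u⟫ ^ 2 = ρ ^ 2

lemma EuclideanSpace.norm_eq_one_iff_fin_three (x : EuclideanSpace ℝ (Fin 3)) :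
    ‖x‖ = 1 ↔ x 0 ^ 2 + x 1 ^ 2 + x 2 ^ 2 = 1 := by
  rw [← norm_sq_fin_three, pow_eq_one_iff_of_nonneg (norm_nonneg x) two_ne_zero]

lemma sq_mul_sq_le_of_sq_add_sq_eq_one {x y : ℝ} (h : x ^ 2 + y ^ 2 = 1) :
    x ^ 2 * y ^ 2 ≤ 1 / 4 := by
  nlinarith [sq_nonneg (x ^ 2 - y ^ 2)]

lemma sum_sq_mul_sq_le_of_mul_eq_zero {x y z : ℝ} (h : x ^ 2 + y ^ 2 + z ^ 2 = 1)
    (hxyz : x * y * z = 0) :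
    x ^ 2 * y ^ 2 + x ^ 2 * z ^ 2 + y ^ 2 * z ^ 2 ≤ 1 / 4 := by
  rcases mul_eq_zero.1 hxyz with hxy | rfl
  · rcases mul_eq_zero.1 hxy with rfl | rfl
    · simpa using sq_mul_sq_le_of_sq_add_sq_eq_one (by simpa using h)
    · simpa using sq_mul_sq_le_of_sq_add_sq_eq_one (by simpa using h)
  · simpa using sq_mul_sq_le_of_sq_add_sq_eq_one (by simpa using h)

namespace OnCylinder

open EuclideanSpace

variable {u c : EuclideanSpace ℝ (Fin 3)} {ρ : ℝ}

lemma tetra_coord_equations (h : ∀ i, OnCylinder c u ρ (tetra i)) :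
    (1 - c 0) ^ 2 + (1 - c 1) ^ 2 + (1 - c 2) ^ 2 -
        ((1 - c 0) * u 0 + (1 - c 1) * u 1 + (1 - c 2) * u 2) ^ 2 = ρ ^ 2 ∧
      (1 - c 0) ^ 2 + (-1 - c 1) ^ 2 + (-1 - c 2) ^ 2 -
        ((1 - c 0) * u 0 + (-1 - c 1) * u 1 + (-1 - c 2) * u 2) ^ 2 = ρ ^ 2 ∧
      (-1 - c 0) ^ 2 + (1 - c 1) ^ 2 + (-1 - c 2) ^ 2 -
        ((-1 - c 0) * u 0 + (1 - c 1) * u 1 + (-1 - c 2) * u 2) ^ 2 = ρ ^ 2 ∧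
      (-1 - c 0) ^ 2 + (-1 - c 1) ^ 2 + (1 - c 2) ^ 2 -
        ((-1 - c 0) * u 0 + (-1 - c 1) * u 1 + (1 - c 2) * u 2) ^ 2 = ρ ^ 2 := by
  simp only [OnCylinder, norm_sq_fin_three, inner_fin_three] at h
  refine ⟨?_, ?_, ?_, ?_⟩
  · simpa [tetra] using h 0
  · simpa [tetra] using h 1
  · simpa [tetra] using h 2
  · simpa [tetra] using h 3

lemma tetra_center_coords (h : ∀ i, OnCylinder c u ρ (tetra i)) :
    c 0 = ⟪c, u⟫ * u 0 - u 1 * u 2 ∧ c 1 = ⟪c, u⟫ * u 1 - u 0 * u 2 ∧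
      c 2 = ⟪c, u⟫ * u 2 - u 0 * u 1 := by
  obtain ⟨h₀, h₁, h₂, h₃⟩ := tetra_coord_equations h
  rw [inner_fin_three]
  refine ⟨?_, ?_, ?_⟩
  · linear_combination (h₂ + h₃ - h₁ - h₀) / 8
  · linear_combination (h₁ + h₃ - h₂ - h₀) / 8
  · linear_combination (h₁ + h₂ - h₃ - h₀) / 8

lemma tetra_radius_sq_eq_two_add_norm_sq_sub_inner_sq (hu : ‖u‖ = 1) (h : ∀ i, OnCylinder c u ρ (tetra i)) :
    ρ ^ 2 = 2 + ‖c‖ ^ 2 - ⟪c, u⟫ ^ 2 := by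
  obtain ⟨h₀, h₁, h₂, h₃⟩ := tetra_coord_equations h
  have hu2 := (norm_eq_one_iff_fin_three u).1 hu
  rw [norm_sq_fin_three, inner_fin_three]
  linear_combination -(h₀ + h₁ + h₂ + h₃) / 4 - hu2

lemma tetra_axis_coords_mul_eq_zero (hu : ‖u‖ = 1) (h : ∀ i, OnCylinder c u ρ (tetra i)) :
    u 0 * u 1 * u 2 = 0 := by
  obtain ⟨h₀, h₁, h₂⟩ := tetra_center_coords h
  have hu2 := (norm_eq_one_iff_fin_three u).1 hu
  have hs := inner_fin_three c u
  linear_combination (u 0 * h₀ + u 1 * h₁ + u 2 * h₂ + ⟪c, u⟫ * hu2 + hs) / 3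

lemma tetra_radius_sq_eq_two_add_axis_sq_products (hu : ‖u‖ = 1) (h : ∀ i, OnCylinder c u ρ (tetra i)) :
    ρ ^ 2 = 2 + (u 0 ^ 2 * u 1 ^ 2 + u 0 ^ 2 * u 2 ^ 2 + u 1 ^ 2 * u 2 ^ 2) := by
  obtain ⟨h₀, h₁, h₂⟩ := tetra_center_coords h
  have hu2 := (norm_eq_one_iff_fin_three u).1 hu
  have hxyz := tetra_axis_coords_mul_eq_zero hu h
  rw [tetra_radius_sq_eq_two_add_norm_sq_sub_inner_sq hu h, norm_sq_fin_three, h₀, h₁, h₂]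
  linear_combination ⟪c, u⟫ ^ 2 * hu2 - 6 * ⟪c, u⟫ * hxyz

lemma tetra_radius_le (hu : ‖u‖ = 1) (hρ : 0 ≤ ρ) (h : ∀ i, OnCylinder c u ρ (tetra i)) :
    ρ ≤ 3 / 2 := by
  have hσ := sum_sq_mul_sq_le_of_mul_eq_zero ((norm_eq_one_iff_fin_three u).1 hu)
    (tetra_axis_coords_mul_eq_zero hu h)
  rw [← sq_le_sq₀ hρ (by norm_num), tetra_radius_sq_eq_two_add_axis_sq_products hu h]
  linarith

end OnCylinder

/-- Equality in the bound: `u 0 = 0`, `u 1 ^ 2 = u 2 ^ 2 = 1 / 2`, and the center from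
`OnCylinder.tetra_center_coords` with `⟪c, u⟫ = 0`. -/
lemma exists_onCylinder_tetra_three_halves :
    ∃ u c : EuclideanSpace ℝ (Fin 3), ‖u‖ = 1 ∧ ∀ i, OnCylinder c u (3 / 2) (tetra i) := by
  have hs : √2 ^ 2 = 2 := Real.sq_sqrt zero_le_two
  refine ⟨!₂[0, √2 / 2, √2 / 2], !₂[-1 / 2, 0, 0], ?_, fun i => ?_⟩
  · rw [EuclideanSpace.norm_eq_one_iff_fin_three]
    simp only [Matrix.cons_val]
    linear_combination hs / 2
  · simp only [OnCylinder, EuclideanSpace.norm_sq_fin_three, EuclideanSpace.inner_fin_three]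
    fin_cases i <;> simp [tetra] <;> linarith [hs]

/-- Every cylinder circumscribed to the regular tetrahedron has radius `ρ ≤ 3/2`,
and there is a circumscribed cylinder of radius exactly `3/2`. -/
theorem max_radius_circumscribed_cylinder_tetrahedron :
    (∀ (u c : EuclideanSpace ℝ (Fin 3)) (ρ : ℝ), ‖u‖ = 1 → 0 ≤ ρ →
        (∀ i : Fin 4, ‖tetra i - c‖ ^ 2 - (inner ℝ (tetra i - c) u : ℝ) ^ 2 = ρ ^ 2) →
        ρ ≤ 3 / 2) ∧
    (∃ (u c : EuclideanSpace ℝ (Fin 3)), ‖u‖ = 1 ∧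
        ∀ i : Fin 4, ‖tetra i - c‖ ^ 2 - (inner ℝ (tetra i - c) u : ℝ) ^ 2
          = (3 / 2 : ℝ) ^ 2) :=
  ⟨fun _ _ _ hu hρ h => OnCylinder.tetra_radius_le hu hρ h,
    exists_onCylinder_tetra_three_halves⟩
end

section
/- Let u be a unit vector, c ∈ ℝ³ with ⟨c,u⟩ = 0, and ρ ≥ 0 such that the cylinder (u,c,ρ) is circumscribed to the four vertices v₁,…,v₄ of the regular tetrahedron. Then ρ = 3/2 if and only if exactly one coordinate of u is zero and the other two coordinates are each ±1/√2; these twelve unit vectors give six distinct axis directions, namely the six directions parallel to the edges of the tetrahedron. In particular there are exactly six maximal-radius circumscribed cylinders. -/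
/-!
Differences of the four circumscription equations are linear in the axis point `c` and force
`c = -(u₁u₂, u₀u₂, u₀u₁)`. Then `⟪c, u⟫ = -3 u₀u₁u₂`, so some coordinate of `u` vanishes, and
`ρ² = 2 + (u₀u₁)² + (u₁u₂)² + (u₀u₂)²`. If `u₀ = 0`, say, then `u₁² + u₂² = 1` and
`(u₁u₂)² ≤ 1/4` with equality iff `u₁² = u₂² = 1/2`; such a `u` is `(2√2)⁻¹` times an edge vector.
-/

open Real
open scoped InnerProductSpace

/-- For a unit vector `u`, the left side is the squared distance from `x i` to the axis line. -/
def IsCircumscribedCylinder {ι E : Type*} [NormedAddCommGroup E] [InnerProductSpace ℝ E]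
    (x : ι → E) (c u : E) (ρ : ℝ) : Prop :=
  ∀ i, ‖x i - c‖ ^ 2 - ⟪x i - c, u⟫_ℝ ^ 2 = ρ ^ 2

lemma EuclideanSpace.real_inner_eq_sum {n : Type*} [Fintype n] (v w : EuclideanSpace ℝ n) :
    ⟪v, w⟫_ℝ = ∑ k, v k * w k := by
  simp [PiLp.inner_apply, mul_comm]

lemma IsCircumscribedCylinder.sum_coords {ι n : Type*} [Fintype n] {x : ι → EuclideanSpace ℝ n}
    {c u : EuclideanSpace ℝ n} {ρ : ℝ} (h : IsCircumscribedCylinder x c u ρ) (i : ι) :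
    ∑ k, (x i k - c k) ^ 2 - (∑ k, (x i k - c k) * u k) ^ 2 = ρ ^ 2 := by
  simpa [EuclideanSpace.real_norm_sq_eq, EuclideanSpace.real_inner_eq_sum] using h i

lemma sq_eq_half_iff (a : ℝ) : a ^ 2 = 1 / 2 ↔ a = 1 / √2 ∨ a = -(1 / √2) := by
  rw [← sq_eq_sq_iff_eq_or_eq_neg, div_pow, one_pow, sq_sqrt zero_le_two]

lemma mul_sq_eq_quarter_iff {a b : ℝ} (h : a ^ 2 + b ^ 2 = 1) :
    (a * b) ^ 2 = 1 / 4 ↔ a ^ 2 = 1 / 2 ∧ b ^ 2 = 1 / 2 := by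
  have key : (a ^ 2 - b ^ 2) ^ 2 = 1 - 4 * (a * b) ^ 2 := by
    linear_combination (a ^ 2 + b ^ 2 + 1) * h
  constructor
  · intro hab
    have hdiff : (a ^ 2 - b ^ 2) ^ 2 = 0 := by rw [key, hab]; norm_num
    have := pow_eq_zero_iff two_ne_zero |>.mp hdiff
    constructor <;> linarith
  · rintro ⟨ha, hb⟩
    rw [mul_pow, ha, hb]
    norm_num

lemma pairwise_mul_sq_sum_eq_quarter_iff {x y z : ℝ} (h : x ^ 2 + y ^ 2 + z ^ 2 = 1)
    (hxyz : x * y * z = 0) :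
    (x * y) ^ 2 + (y * z) ^ 2 + (x * z) ^ 2 = 1 / 4 ↔
      x = 0 ∧ y ^ 2 = 1 / 2 ∧ z ^ 2 = 1 / 2 ∨ y = 0 ∧ x ^ 2 = 1 / 2 ∧ z ^ 2 = 1 / 2 ∨
        z = 0 ∧ x ^ 2 = 1 / 2 ∧ y ^ 2 = 1 / 2 := by
  obtain (rfl | rfl) | rfl := mul_eq_zero.mp hxyz |>.imp_left mul_eq_zero.mp <;>
  · simp only [zero_pow two_ne_zero, zero_add, add_zero] at h
    simpa using mul_sq_eq_quarter_iff h

section Tetrahedron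

variable {u c : EuclideanSpace ℝ (Fin 3)} {ρ : ℝ}

lemma IsCircumscribedCylinder.tetra_axis_point (hcu : ⟪c, u⟫_ℝ = 0)
    (h : IsCircumscribedCylinder tetra c u ρ) :
    c 0 = -(u 1 * u 2) ∧ c 1 = -(u 0 * u 2) ∧ c 2 = -(u 0 * u 1) := by
  have e0 := h.sum_coords 0
  have e1 := h.sum_coords 1
  have e2 := h.sum_coords 2
  have e3 := h.sum_coords 3
  simp only [tetra, WithLp.equiv_symm_apply, Fin.sum_univ_three, Matrix.cons_val] at e0 e1 e2 e3
  rw [EuclideanSpace.real_inner_eq_sum, Fin.sum_univ_three] at hcu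
  refine ⟨?_, ?_, ?_⟩
  · linear_combination (-e0 - e1 + e2 + e3) / 8 + u 0 * hcu
  · linear_combination (-e0 + e1 - e2 + e3) / 8 + u 1 * hcu
  · linear_combination (-e0 + e1 + e2 - e3) / 8 + u 2 * hcu

lemma IsCircumscribedCylinder.tetra_coord_prod_eq_zero (hcu : ⟪c, u⟫_ℝ = 0)
    (h : IsCircumscribedCylinder tetra c u ρ) : u 0 * u 1 * u 2 = 0 := by
  obtain ⟨h0, h1, h2⟩ := h.tetra_axis_point hcu
  rw [EuclideanSpace.real_inner_eq_sum, Fin.sum_univ_three, h0, h1, h2] at hcu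
  linear_combination -hcu / 3

lemma IsCircumscribedCylinder.tetra_radius_sq (hcu : ⟪c, u⟫_ℝ = 0)
    (hunit : u 0 ^ 2 + u 1 ^ 2 + u 2 ^ 2 = 1) (h : IsCircumscribedCylinder tetra c u ρ) :
    ρ ^ 2 = 2 + (u 0 * u 1) ^ 2 + (u 1 * u 2) ^ 2 + (u 0 * u 2) ^ 2 := by
  obtain ⟨h0, h1, h2⟩ := h.tetra_axis_point hcu
  have hprod := h.tetra_coord_prod_eq_zero hcu
  have e0 := h.sum_coords 0
  simp only [tetra, WithLp.equiv_symm_apply, Fin.sum_univ_three, Matrix.cons_val, h0, h1, h2] at e0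
  linear_combination -e0 - hunit - (6 * (u 0 + u 1 + u 2) + 9 * (u 0 * u 1 * u 2)) * hprod

lemma IsCircumscribedCylinder.tetra_radius_eq_three_halves_iff (hu : ‖u‖ = 1)
    (hcu : ⟪c, u⟫_ℝ = 0) (hρ : 0 ≤ ρ) (h : IsCircumscribedCylinder tetra c u ρ) :
    ρ = 3 / 2 ↔ ∃ j, u j = 0 ∧ ∀ k, k ≠ j → u k ^ 2 = 1 / 2 := by
  have hunit : u 0 ^ 2 + u 1 ^ 2 + u 2 ^ 2 = 1 := by
    rw [← Fin.sum_univ_three (fun k => u k ^ 2), ← EuclideanSpace.real_norm_sq_eq, hu, one_pow]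
  have hρ2 := h.tetra_radius_sq hcu hunit
  calc ρ = 3 / 2 ↔ ρ ^ 2 = (3 / 2) ^ 2 := (pow_left_inj₀ hρ (by norm_num) two_ne_zero).symm
    _ ↔ (u 0 * u 1) ^ 2 + (u 1 * u 2) ^ 2 + (u 0 * u 2) ^ 2 = 1 / 4 := by
      constructor <;> intro <;> linarith
    _ ↔ _ := by
      rw [pairwise_mul_sq_sum_eq_quarter_iff hunit (h.tetra_coord_prod_eq_zero hcu)]
      simp [Fin.exists_fin_succ, Fin.forall_fin_succ]

end Tetrahedron

lemma exists_tetra_sub_eq_two_smul {w : EuclideanSpace ℝ (Fin 3)} {j : Fin 3} (hj : w j = 0)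
    (hk : ∀ k, k ≠ j → w k ^ 2 = 1) :
    ∃ i i', i ≠ i' ∧ tetra i - tetra i' = (2 : ℝ) • w := by
  simp only [sq_eq_one_iff] at hk
  fin_cases j <;> simp [Fin.forall_fin_succ] at hj hk <;> obtain ⟨h₁ | h₁, h₂ | h₂⟩ := hk <;>
    simp [Fin.exists_fin_succ, WithLp.ext_iff, funext_iff, Fin.forall_fin_succ, tetra, hj, h₁, h₂] <;>
    norm_num

lemma exists_tetra_sub_eq_smul {u : EuclideanSpace ℝ (Fin 3)} {j : Fin 3} (hj : u j = 0)
    (hk : ∀ k, k ≠ j → u k ^ 2 = 1 / 2) :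
    ∃ i i', i ≠ i' ∧ ∃ s : ℝ, tetra i - tetra i' = s • u := by
  obtain ⟨i, i', hii', hw⟩ := exists_tetra_sub_eq_two_smul (w := √2 • u) (j := j)
    (by simp [hj]) fun k hkj => by simp [mul_pow, hk k hkj]
  exact ⟨i, i', hii', 2 * √2, by rw [hw, smul_smul]⟩

/-- For a cylinder circumscribed to the regular tetrahedron (with axis point `c` orthogonal
to the unit axis direction `u`), the radius equals `3/2` iff exactly one coordinate of `u` is
zero and the other two are each `±1/√2`; moreover such an axis direction is parallel to one of
the six edges of the tetrahedron.  In particular there are exactly six maximal-radius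
circumscribed cylinders. -/
theorem max_cylinders_tetrahedron_characterization
    (u c : EuclideanSpace ℝ (Fin 3)) (ρ : ℝ)
    (hu : ‖u‖ = 1) (hcu : (inner ℝ c u : ℝ) = 0) (hρ : 0 ≤ ρ)
    (hcirc : ∀ i : Fin 4, ‖tetra i - c‖ ^ 2 - (inner ℝ (tetra i - c) u : ℝ) ^ 2 = ρ ^ 2) :
    (ρ = 3 / 2 ↔
      ∃ j : Fin 3, u j = 0 ∧ ∀ k : Fin 3, k ≠ j →
        (u k = 1 / Real.sqrt 2 ∨ u k = -(1 / Real.sqrt 2))) ∧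
    (ρ = 3 / 2 →
      ∃ i j : Fin 4, i ≠ j ∧ ∃ s : ℝ, tetra i - tetra j = s • u) := by
  have key := IsCircumscribedCylinder.tetra_radius_eq_three_halves_iff hu hcu hρ hcirc
  refine ⟨by simpa only [sq_eq_half_iff] using key, fun h => ?_⟩
  obtain ⟨j, hj, hk⟩ := key.mp h
  exact exists_tetra_sub_eq_smul hj hk
end

section
/- A unit vector u ∈ ℝ³ satisfies ⟨u, vᵢ⟩² = 1 for all four regular tetrahedron vertices vᵢ if and only if u is one of the six vectors ±e₁, ±e₂, ±e₃ of the standard basis and their opposites. -/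
theorem EuclideanSpace.eq_single_one_or_eq_neg_single_one_iff {𝕜 ι : Type*} [RCLike 𝕜]
    [Fintype ι] [DecidableEq ι] (u : EuclideanSpace 𝕜 ι) (j : ι) :
    u = single j 1 ∨ u = -single j 1 ↔ u j ^ 2 = 1 ∧ ∀ k ≠ j, u k = 0 := by
  rw [sq_eq_one_iff]
  constructor
  · rintro (rfl | rfl) <;> simp +contextual
  · rintro ⟨hj | hj, h⟩ <;> [left; right] <;> ext k <;>
      rcases eq_or_ne k j with rfl | hk <;> simp [*]

theorem sq_add_sq_add_sq_eq_one_and_mul_eq_zero_iff {R : Type*} [CommRing R] [NoZeroDivisors R]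
    {a b c : R} :
    a ^ 2 + b ^ 2 + c ^ 2 = 1 ∧ a * b = 0 ∧ a * c = 0 ∧ b * c = 0 ↔
      (a ^ 2 = 1 ∧ b = 0 ∧ c = 0) ∨ (b ^ 2 = 1 ∧ a = 0 ∧ c = 0) ∨ (c ^ 2 = 1 ∧ a = 0 ∧ b = 0) := by
  constructor
  · rintro ⟨hs, hab, hac, hbc⟩
    rcases eq_or_ne a 0 with rfl | ha
    · rcases eq_or_ne b 0 with rfl | hb
      · right; right; simpa using hs
      · obtain rfl : c = 0 := (mul_eq_zero.1 hbc).resolve_left hb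
        right; left; simpa using hs
    · obtain rfl : b = 0 := (mul_eq_zero.1 hab).resolve_left ha
      obtain rfl : c = 0 := (mul_eq_zero.1 hac).resolve_left ha
      left; simpa using hs
  · rintro (⟨h, rfl, rfl⟩ | ⟨h, rfl, rfl⟩ | ⟨h, rfl, rfl⟩) <;> simp [h]

theorem sq_sign_sums_eq_one_iff {K : Type*} [Field K] [CharZero K] {a b c : K} :
    ((a + b + c) ^ 2 = 1 ∧ (a - b - c) ^ 2 = 1 ∧ (-a + b - c) ^ 2 = 1 ∧ (-a - b + c) ^ 2 = 1) ↔
      a ^ 2 + b ^ 2 + c ^ 2 = 1 ∧ a * b = 0 ∧ a * c = 0 ∧ b * c = 0 := by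
  constructor
  · rintro ⟨h₁, h₂, h₃, h₄⟩
    refine ⟨?_, ?_, ?_, ?_⟩
    · linear_combination (h₁ + h₂ + h₃ + h₄) / 4
    · linear_combination (h₁ - h₂ - h₃ + h₄) / 8
    · linear_combination (h₁ - h₂ + h₃ - h₄) / 8
    · linear_combination (h₁ + h₂ - h₃ - h₄) / 8
  · rintro ⟨hs, hab, hac, hbc⟩
    refine ⟨?_, ?_, ?_, ?_⟩
    · linear_combination hs + 2 * (hab + hac + hbc)
    · linear_combination hs + 2 * (-hab - hac + hbc)
    · linear_combination hs + 2 * (-hab + hac - hbc)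
    · linear_combination hs + 2 * (hab - hac - hbc)

theorem inner_tetra (u : EuclideanSpace ℝ (Fin 3)) (i : Fin 4) :
    inner ℝ u (tetra i) =
      ![u 0 + u 1 + u 2, u 0 - u 1 - u 2, -u 0 + u 1 - u 2, -u 0 - u 1 + u 2] i := by
  fin_cases i <;> simp [tetra, PiLp.inner_apply, Fin.sum_univ_three] <;> ring

theorem inner_sq_one_iff_basis_general (u : EuclideanSpace ℝ (Fin 3)) :
    (∀ i : Fin 4, (inner ℝ u (tetra i) : ℝ) ^ 2 = 1) ↔
      ∃ j : Fin 3, u = EuclideanSpace.single j 1 ∨ u = -EuclideanSpace.single j 1 := by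
  simp only [Fin.forall_fin_succ, Fin.exists_fin_succ, inner_tetra,
    EuclideanSpace.eq_single_one_or_eq_neg_single_one_iff]
  simpa [-sq_eq_one_iff] using
    sq_sign_sums_eq_one_iff.trans sq_add_sq_add_sq_eq_one_and_mul_eq_zero_iff

/-- A unit vector `u ∈ ℝ³` satisfies `⟨u, vᵢ⟩² = 1` for all four regular tetrahedron
vertices iff `u` is a standard basis vector or the opposite of one. -/
theorem inner_sq_one_iff_basis (u : EuclideanSpace ℝ (Fin 3)) (hu : ‖u‖ = 1) :
    (∀ i : Fin 4, (inner ℝ u (tetra i) : ℝ) ^ 2 = 1) ↔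
      ∃ j : Fin 3, u = EuclideanSpace.single j 1 ∨ u = -EuclideanSpace.single j 1 :=
  inner_sq_one_iff_basis_general u
end

section
/- (Theorem 2) Under the standing hypotheses (five centered points x₁,…,x₅ spanning ℝ³), the 3×3 matrix M = Σᵢ tᵢBᵢ is the zero matrix if and only if two of the five points are identical, i.e. there exist indices i ≠ j with xᵢ = xⱼ. -/
/-!
Because `∑ tᵢ = 0`, the centring term cancels and `M = tr(Q)·I − Q` with `Q = ∑ tᵢ xᵢxᵢᵀ`, so
`M = 0` iff `Q = 0`: the signed measure `∑ tᵢ δ(xᵢ)` has vanishing moments of orders 0, 1 and 2.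
Then `∑ tᵢ (f xᵢ − c)² = 0` for every linear form `f` and constant `c`; if `f = c` at the points
with `tᵢ > 0`, the remaining terms are `≤ 0`, so `f = c` at every point with `tᵢ ≠ 0`.
Hence, if at most one `tᵢ` vanished, the points of either sign would span `ℝ³`, which needs six
points. So two coefficients vanish, one sign class is a single index `p`, and every point of the
opposite sign equals `xₚ`.

Conversely, centred points spanning `ℝ³` have a one-dimensional space of affine dependencies;
if `xᵢ = xⱼ` it is spanned by `eᵢ − eⱼ`, so `t = c (eᵢ − eⱼ)` and `Q = c (xᵢxᵢᵀ − xⱼxⱼᵀ) = 0`.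
-/

open Matrix

/-- `Bᵢ = tr(Vᵢ − V)·I₃ − (Vᵢ − V)` where `Vᵢ = xᵢxᵢᵀ` and `V = (Σⱼ xⱼxⱼᵀ)/5`. -/
noncomputable def Bmat (x : Fin 5 → Fin 3 → ℝ) (i : Fin 5) : Matrix (Fin 3) (Fin 3) ℝ :=
  (vecMulVec (x i) (x i) - (5 : ℝ)⁻¹ • ∑ j, vecMulVec (x j) (x j)).trace •
      (1 : Matrix (Fin 3) (Fin 3) ℝ)
    - (vecMulVec (x i) (x i) - (5 : ℝ)⁻¹ • ∑ j, vecMulVec (x j) (x j))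

open Finset Module Submodule

section Real

variable {ι : Type*} [Fintype ι]

lemma sum_mul_sub_sq_eq_zero {t a : ι → ℝ} (h0 : ∑ i, t i = 0) (h1 : ∑ i, t i * a i = 0)
    (h2 : ∑ i, t i * a i ^ 2 = 0) (c : ℝ) : ∑ i, t i * (a i - c) ^ 2 = 0 := by
  have h (i : ι) : t i * (a i - c) ^ 2 = t i * a i ^ 2 - 2 * c * (t i * a i) + c ^ 2 * t i := by
    ring
  simp only [h, sum_add_distrib, sum_sub_distrib, ← mul_sum, h0, h1, h2]
  ring

lemma eq_zero_of_sum_mul_sq_eq_zero {t b : ι → ℝ} (h : ∑ i, t i * b i ^ 2 = 0)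
    (hpos : ∀ i, 0 < t i → b i = 0) {i : ι} (hi : t i ≠ 0) : b i = 0 := by
  have hle : ∀ j ∈ univ, t j * b j ^ 2 ≤ 0 := fun j _ => by
    rcases le_or_gt (t j) 0 with htj | htj
    · exact mul_nonpos_of_nonpos_of_nonneg htj (sq_nonneg _)
    · simp [hpos j htj]
  simpa [hi] using (sum_eq_zero_iff_of_nonpos hle).1 h i (mem_univ i)

end Real

variable {ι E : Type*} [Fintype ι] [AddCommGroup E] [Module ℝ E]

structure MomentsVanish (t : ι → ℝ) (x : ι → E) : Prop where
  sum_eq_zero : ∑ i, t i = 0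
  sum_smul_eq_zero : ∑ i, t i • x i = 0
  sum_mul_sq_eq_zero : ∀ f : Dual ℝ E, ∑ i, t i * f (x i) ^ 2 = 0

namespace MomentsVanish

variable {t : ι → ℝ} {x : ι → E}

lemma neg (h : MomentsVanish t x) : MomentsVanish (-t) x where
  sum_eq_zero := by simp [h.sum_eq_zero]
  sum_smul_eq_zero := by simp [neg_smul, h.sum_smul_eq_zero]
  sum_mul_sq_eq_zero f := by simp [h.sum_mul_sq_eq_zero f]

lemma apply_eq_of_forall_pos (h : MomentsVanish t x) (f : Dual ℝ E) {c : ℝ}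
    (hc : ∀ p, 0 < t p → f (x p) = c) {i : ι} (hi : t i ≠ 0) : f (x i) = c := by
  have h1 : ∑ i, t i * f (x i) = 0 := by
    simpa [map_sum, map_smul] using congrArg f h.sum_smul_eq_zero
  have hc' := sum_mul_sub_sq_eq_zero h.sum_eq_zero h1 (h.sum_mul_sq_eq_zero f) c
  exact sub_eq_zero.1 <| eq_zero_of_sum_mul_sq_eq_zero hc' (fun p hp => sub_eq_zero.2 (hc p hp)) hi

lemma eq_of_forall_pos_eq (h : MomentsVanish t x) {p : ι} (hp : ∀ i, 0 < t i → i = p)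
    {i : ι} (hi : t i ≠ 0) : x i = x p := by
  rw [← sub_eq_zero, ← forall_dual_apply_eq_zero_iff ℝ]
  intro f
  rw [map_sub, sub_eq_zero]
  exact h.apply_eq_of_forall_pos f (fun q hq => by rw [hp q hq]) hi

lemma span_pos_eq_top (h : MomentsVanish t x) (hsum : ∑ i, x i = 0)
    (hspan : span ℝ (Set.range x) = ⊤) (hzero : ∀ i j, t i = 0 → t j = 0 → i = j) :
    span ℝ (Set.range fun p : {p // 0 < t p} => x p) = ⊤ := by
  classical
  by_contra hne
  obtain ⟨f, hf, hker⟩ := exists_le_ker_of_lt_top _ (lt_top_iff_ne_top.2 hne)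
  have hnz : ∀ i, t i ≠ 0 → f (x i) = 0 := fun i hi =>
    h.apply_eq_of_forall_pos f (fun p hp => hker (subset_span ⟨⟨p, hp⟩, rfl⟩)) hi
  -- a point with zero coefficient is minus the sum of the others, which all have nonzero ones
  have hall (i : ι) : f (x i) = 0 := by
    by_cases hi : t i = 0
    · have hfsum := congrArg f hsum
      rw [map_sum, ← add_sum_erase _ _ (mem_univ i), Finset.sum_eq_zero fun j hj =>
        hnz j fun hj0 => ne_of_mem_erase hj (hzero j i hj0 hi)] at hfsum
      simpa using hfsum
    · exact hnz i hi
  have : span ℝ (Set.range x) ≤ LinearMap.ker f := span_le.2 (Set.range_subset_iff.2 hall)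
  exact hf (LinearMap.ext fun v => by rw [hspan] at this; exact this mem_top)

lemma finrank_le_card_pos (h : MomentsVanish t x) (hsum : ∑ i, x i = 0)
    (hspan : span ℝ (Set.range x) = ⊤) (hzero : ∀ i j, t i = 0 → t j = 0 → i = j) :
    finrank ℝ E ≤ #{p | 0 < t p} := by
  calc finrank ℝ E = finrank ℝ (span ℝ (Set.range fun p : {p // 0 < t p} => x p)) := by
        rw [h.span_pos_eq_top hsum hspan hzero, finrank_top]
    _ ≤ Fintype.card {p // 0 < t p} := finrank_range_le_card _
    _ = #{p | 0 < t p} := Fintype.card_subtype _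

lemma exists_ne_eq_of_card_pos_eq_one (h : MomentsVanish t x) (hpos : #{p | 0 < t p} = 1)
    {n : ι} (hn : t n < 0) : ∃ i j, i ≠ j ∧ x i = x j := by
  obtain ⟨p, hp⟩ := card_eq_one.1 hpos
  have hp' (i : ι) (hi : 0 < t i) : i = p := by
    simpa [hp] using (mem_filter.2 ⟨mem_univ i, hi⟩ : i ∈ ({p | 0 < t p} : Finset ι))
  refine ⟨n, p, fun hnp => ?_, h.eq_of_forall_pos_eq hp' hn.ne⟩
  have : p ∈ ({p | 0 < t p} : Finset ι) := hp ▸ mem_singleton_self p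
  simp only [mem_filter] at this
  linarith [hnp ▸ this.2]

theorem exists_ne_eq (h : MomentsVanish t x) (ht : t ≠ 0) (hsum : ∑ i, x i = 0)
    (hspan : span ℝ (Set.range x) = ⊤) (hι : Fintype.card ι = 5) (hE : finrank ℝ E = 3) :
    ∃ i j, i ≠ j ∧ x i = x j := by
  classical
  have hnz : ∃ i ∈ univ, t i ≠ 0 := by simpa using Function.ne_iff.1 ht
  obtain ⟨p, -, hp⟩ := exists_pos_of_sum_zero_of_exists_nonzero t h.sum_eq_zero hnz
  obtain ⟨n, -, hn⟩ := exists_pos_of_sum_zero_of_exists_nonzero (-t) h.neg.sum_eq_zero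
    (by simpa using hnz)
  set P : Finset ι := {i | 0 < t i}
  set N : Finset ι := {i | t i < 0}
  have hcard_neg : #{i | 0 < (-t) i} = #N := by simp [N]
  have hdisj : Disjoint P N := disjoint_filter.2 fun i _ h1 h2 => by linarith
  -- if at most one coefficient vanished, both sign classes would span `E`
  obtain ⟨i, j, hij, hi, hj⟩ : ∃ i j, i ≠ j ∧ t i = 0 ∧ t j = 0 := by
    by_contra! hzero
    have hzero' (i j : ι) (hi : t i = 0) (hj : t j = 0) : i = j :=
      by_contra fun hij => hzero i j hij hi hj
    have hP : finrank ℝ E ≤ #P := h.finrank_le_card_pos hsum hspan hzero'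
    have hN : finrank ℝ E ≤ #N :=
      (h.neg.finrank_le_card_pos hsum hspan (by simpa using hzero')).trans_eq hcard_neg
    have := card_union_of_disjoint hdisj ▸ card_le_univ (P ∪ N)
    omega
  have hsub : P ∪ N ⊆ (univ.erase i).erase j := by
    intro k hk
    simp only [P, N, mem_union, mem_filter, mem_univ, true_and] at hk
    simp only [mem_erase, mem_univ, and_true]
    constructor <;> rintro rfl <;> rcases hk with hk | hk <;> linarith
  have := card_union_of_disjoint hdisj ▸ card_le_card hsub
  rw [card_erase_of_mem (mem_erase.2 ⟨hij.symm, mem_univ j⟩), card_erase_of_mem (mem_univ i),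
    card_univ, hι] at this
  have hP : 0 < #P := card_pos.2 ⟨p, by simp [P, hp]⟩
  have hN : 0 < #N := card_pos.2 ⟨n, by simpa [N] using hn⟩
  rcases (by omega : #P = 1 ∨ #N = 1) with hP | hN
  · exact h.exists_ne_eq_of_card_pos_eq_one hP (n := n) (by simpa using hn)
  · exact h.neg.exists_ne_eq_of_card_pos_eq_one (hcard_neg ▸ hN) (n := p) (by simpa using hp)

end MomentsVanish

section AffineDependence

variable {ι E : Type*} [Fintype ι] [AddCommGroup E] [Module ℝ E] {x : ι → E}

lemma span_range_prod_one_eq_top [Nonempty ι] (hsum : ∑ i, x i = 0)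
    (hspan : span ℝ (Set.range x) = ⊤) :
    span ℝ (Set.range fun i => (x i, (1 : ℝ))) = ⊤ := by
  set S := span ℝ (Set.range fun i => (x i, (1 : ℝ)))
  have hmem (i : ι) : (x i, (1 : ℝ)) ∈ S := subset_span ⟨i, rfl⟩
  have hone : ((0 : E), (1 : ℝ)) ∈ S := by
    convert S.smul_mem (Fintype.card ι : ℝ)⁻¹ (S.sum_mem (t := univ) fun i _ => hmem i) using 1
    ext <;> simp [Prod.fst_sum, Prod.snd_sum, hsum]
  have hx : span ℝ (Set.range x) ≤ S.comap (LinearMap.inl ℝ E ℝ) :=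
    span_le.2 <| Set.range_subset_iff.2 fun i => by
      show (x i, (0 : ℝ)) ∈ S
      simpa using S.sub_mem (hmem i) hone
  rw [eq_top_iff]
  rintro ⟨v, a⟩ -
  have hv : (v, (0 : ℝ)) ∈ S := hx (hspan ▸ mem_top)
  simpa using S.add_mem hv (S.smul_mem a hone)

lemma mem_ker_linearCombination_prod_one {s : ι → ℝ} :
    s ∈ LinearMap.ker (Fintype.linearCombination ℝ fun i => (x i, (1 : ℝ))) ↔
      ∑ i, s i • x i = 0 ∧ ∑ i, s i = 0 := by
  simp [Fintype.linearCombination_apply, Prod.ext_iff, Prod.fst_sum, Prod.snd_sum]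

lemma finrank_ker_linearCombination_prod_one [FiniteDimensional ℝ E] [Nonempty ι]
    (hsum : ∑ i, x i = 0) (hspan : span ℝ (Set.range x) = ⊤) :
    finrank ℝ (LinearMap.ker (Fintype.linearCombination ℝ fun i => (x i, (1 : ℝ)))) +
      (finrank ℝ E + 1) = Fintype.card ι := by
  have := (Fintype.linearCombination ℝ fun i => (x i, (1 : ℝ))).finrank_range_add_finrank_ker
  rw [Fintype.range_linearCombination, span_range_prod_one_eq_top hsum hspan, finrank_top,
    finrank_prod, finrank_self, finrank_fintype_fun_eq_card] at this
  omega

lemma exists_eq_smul_single_sub_single [FiniteDimensional ℝ E] [DecidableEq ι]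
    (hsum : ∑ i, x i = 0) (hspan : span ℝ (Set.range x) = ⊤)
    (hcard : Fintype.card ι = finrank ℝ E + 2) {t : ι → ℝ} (h0 : ∑ i, t i = 0)
    (h1 : ∑ i, t i • x i = 0) {i j : ι} (hij : i ≠ j) (hx : x i = x j) :
    ∃ c : ℝ, t = c • (Pi.single i 1 - Pi.single j 1) := by
  have : Nonempty ι := ⟨i⟩
  set K := LinearMap.ker (Fintype.linearCombination ℝ fun i => (x i, (1 : ℝ)))
  have hK : finrank ℝ K = 1 := by
    have : finrank ℝ K + (finrank ℝ E + 1) = Fintype.card ι :=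
      finrank_ker_linearCombination_prod_one hsum hspan
    omega
  have he : Pi.single i 1 - Pi.single j 1 ∈ K :=
    mem_ker_linearCombination_prod_one.2 ⟨by simp [sub_smul, hx], by simp⟩
  have he0 : (⟨_, he⟩ : K) ≠ 0 := fun h => by
    simpa [hij] using congrFun (congrArg Subtype.val h) i
  obtain ⟨c, hc⟩ := (finrank_eq_one_iff_of_nonzero' _ he0).1 hK
    ⟨t, mem_ker_linearCombination_prod_one.2 ⟨h1, h0⟩⟩
  exact ⟨c, (congrArg Subtype.val hc).symm⟩

end AffineDependence

lemma trace_smul_one_sub_eq_zero_iff {n R : Type*} [Fintype n] [DecidableEq n] [CommRing R]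
    [NoZeroDivisors R] (hn : (Fintype.card n : R) ≠ 1) {Q : Matrix n n R} :
    Q.trace • (1 : Matrix n n R) - Q = 0 ↔ Q = 0 := by
  refine ⟨fun h => ?_, fun h => by simp [h]⟩
  have htr := congrArg trace h
  rw [trace_sub, trace_smul, trace_one, smul_eq_mul, trace_zero] at htr
  have hQ : Q.trace = 0 := by
    have : Q.trace * ((Fintype.card n : R) - 1) = 0 := by linear_combination htr
    simpa [sub_ne_zero.2 hn] using this
  rwa [hQ, zero_smul, zero_sub, neg_eq_zero] at h

lemma sum_smul_Bmat_eq (x : Fin 5 → Fin 3 → ℝ) {t : Fin 5 → ℝ} (ht : ∑ i, t i = 0) :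
    ∑ i, t i • Bmat x i =
      (∑ i, t i • vecMulVec (x i) (x i)).trace • 1 - ∑ i, t i • vecMulVec (x i) (x i) := by
  set C := (5 : ℝ)⁻¹ • ∑ j, vecMulVec (x j) (x j)
  have hB (i : Fin 5) : Bmat x i =
      ((vecMulVec (x i) (x i)).trace • 1 - vecMulVec (x i) (x i)) - (C.trace • 1 - C) := by
    simp only [Bmat, C, trace_sub, sub_smul]
    abel
  simp only [hB, smul_sub, sum_sub_distrib, ← sum_smul, ← sum_mul, ht, zero_mul, zero_smul,
    sub_zero, trace_sum, trace_smul, smul_smul, smul_eq_mul]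

lemma MomentsVanish.of_sum_smul_vecMulVec_eq_zero {ι n : Type*} [Fintype ι] [Fintype n]
    [DecidableEq n] {t : ι → ℝ} {x : ι → n → ℝ} (h0 : ∑ i, t i = 0) (h1 : ∑ i, t i • x i = 0)
    (hQ : ∑ i, t i • vecMulVec (x i) (x i) = 0) : MomentsVanish t x where
  sum_eq_zero := h0
  sum_smul_eq_zero := h1
  sum_mul_sq_eq_zero f := by
    set w : n → ℝ := fun j => f (Pi.single j 1)
    have hf (y : n → ℝ) : f y = y ⬝ᵥ w := by
      conv_lhs => rw [pi_eq_sum_univ' y]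
      simp [dotProduct, w]
    calc ∑ i, t i * f (x i) ^ 2 = (∑ i, t i • vecMulVec (x i) (x i)) *ᵥ w ⬝ᵥ w := by
          simp only [hf, sum_mulVec, sum_dotProduct, vecMulVec_mulVec, smul_mulVec, sq]
          simp [smul_dotProduct]
      _ = 0 := by simp [hQ]

/-- Theorem 2: for five centered points spanning `ℝ³` and `t ≠ 0` with `Xᵀt = 0` and
`Σ tᵢ = 0`, the matrix `M = Σᵢ tᵢ Bᵢ` is zero iff two of the five points coincide. -/
theorem M_eq_zero_iff_two_points_identical (x : Fin 5 → Fin 3 → ℝ)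
    (hsum : ∑ i, x i = 0)
    (hspan : Submodule.span ℝ (Set.range x) = ⊤)
    (t : Fin 5 → ℝ) (ht : t ≠ 0)
    (htX : ∀ j : Fin 3, ∑ i, t i * x i j = 0)
    (ht1 : ∑ i, t i = 0) :
    ∑ i, t i • Bmat x i = 0 ↔ ∃ i j : Fin 5, i ≠ j ∧ x i = x j := by
  have htX' : ∑ i, t i • x i = 0 := funext fun j => by simpa [Finset.sum_apply] using htX j
  rw [sum_smul_Bmat_eq x ht1, trace_smul_one_sub_eq_zero_iff (by norm_num)]
  constructor
  · intro hQ
    exact (MomentsVanish.of_sum_smul_vecMulVec_eq_zero ht1 htX' hQ).exists_ne_eq ht hsum hspan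
      (by simp) (by simp)
  · rintro ⟨i, j, hij, hx⟩
    obtain ⟨c, rfl⟩ := exists_eq_smul_single_sub_single hsum hspan (by simp) ht1 htX' hij hx
    simp [mul_sub, sub_smul, Pi.single_apply, ite_smul, hx]
end

section
/- (Theorem 3) Under the standing hypotheses (five centered points x₁,…,x₅ spanning ℝ³), for every unit vector u ∈ ℝ³ and every c ∈ ℝ³, the following are equivalent: (i) uᵀBᵢu = 2⟨c, xᵢ⟩ for i = 1,…,5 and ⟨c, u⟩ = 0 (system (8)); (ii) c = γ(u)/2, uᵀMu = 0, and ⟨u, γ(u)⟩ = 0 (system (9)). -/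
/-!
Put `X = (x₁ … x₅)ᵀ` and `b = b(u)`; system (8) says `b = X (2c)` and `⟨c, u⟩ = 0`. As `X` is
injective, `b = X v` holds exactly when `v = T⁻¹ Xᵀ b` and `b ⊥ ker Xᵀ`. By rank–nullity,
`ker Xᵀ` is the plane spanned by `𝟙` and `t`. Always `⟨𝟙, b⟩ = uᵀ (Σ Bᵢ) u = 0`, while
`⟨t, b⟩ = uᵀ M u`; so (8) amounts to `2c = γ(u)`, `uᵀ M u = 0` and `⟨c, u⟩ = 0`, which is (9).
-/

open Matrix

/-- `b(u) ∈ ℝ⁵` with `b(u)ᵢ = uᵀBᵢu`. -/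
noncomputable def bvec (x : Fin 5 → Fin 3 → ℝ) (u : Fin 3 → ℝ) : Fin 5 → ℝ :=
  fun i => u ⬝ᵥ (Bmat x i *ᵥ u)

/-- `γ(u) = T⁻¹ Xᵀ b(u)` where `T = XᵀX`. -/
noncomputable def gammaVec (x : Fin 5 → Fin 3 → ℝ) (u : Fin 3 → ℝ) : Fin 3 → ℝ :=
  ((Matrix.of x)ᵀ * Matrix.of x)⁻¹ *ᵥ ((Matrix.of x)ᵀ *ᵥ bvec x u)

namespace Matrix

variable {m n R : Type*} [Fintype m] [Fintype n] [Field R]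

theorem ker_mulVecLin_eq_span_pair {A : Matrix n m R} (hA : LinearMap.range A.mulVecLin = ⊤)
    (hcard : Fintype.card m = Fintype.card n + 2) {p q : m → R} (hp : A *ᵥ p = 0)
    (hq : A *ᵥ q = 0) (hpq : LinearIndependent R ![p, q]) :
    LinearMap.ker A.mulVecLin = Submodule.span R {p, q} := by
  symm
  apply Submodule.eq_of_le_of_finrank_le
  · rw [Submodule.span_le, Set.insert_subset_iff, Set.singleton_subset_iff]
    exact ⟨hp, hq⟩
  · have := LinearMap.finrank_range_add_finrank_ker A.mulVecLin
    rw [hA, finrank_top, Module.finrank_fintype_fun_eq_card,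
      Module.finrank_fintype_fun_eq_card] at this
    have hspan := finrank_span_eq_card hpq
    rw [range_cons_cons_empty, Fintype.card_fin] at hspan
    omega

variable [LinearOrder R] [IsStrictOrderedRing R]

theorem isUnit_transpose_mul_self_of_range_eq_top [DecidableEq n] {X : Matrix m n R}
    (hX : LinearMap.range Xᵀ.mulVecLin = ⊤) : IsUnit (Xᵀ * X) := by
  rw [← mulVec_surjective_iff_isUnit, ← coe_mulVecLin, ← LinearMap.range_eq_top]
  apply Submodule.eq_top_of_finrank_eq
  rw [← rank, rank_transpose_mul_self, ← rank_transpose, rank, hX, finrank_top]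

theorem eq_mulVec_iff_of_isUnit_transpose_mul_self [DecidableEq n] {X : Matrix m n R}
    (hX : IsUnit (Xᵀ * X)) (b : m → R) (v : n → R) :
    b = X *ᵥ v ↔
      v = (Xᵀ * X)⁻¹ *ᵥ (Xᵀ *ᵥ b) ∧ ∀ w ∈ LinearMap.ker Xᵀ.mulVecLin, w ⬝ᵥ b = 0 := by
  have hdet : IsUnit (Xᵀ * X).det := (isUnit_iff_isUnit_det _).mp hX
  have orth : ∀ w ∈ LinearMap.ker Xᵀ.mulVecLin, ∀ v, w ⬝ᵥ (X *ᵥ v) = 0 := by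
    intro w hw v
    rw [dotProduct_mulVec, ← mulVec_transpose, show Xᵀ *ᵥ w = 0 from hw, zero_dotProduct]
  constructor
  · rintro rfl
    refine ⟨?_, fun w hw => orth w hw v⟩
    rw [mulVec_mulVec, mulVec_mulVec, Matrix.mul_assoc, nonsing_inv_mul _ hdet, one_mulVec]
  · rintro ⟨rfl, hb⟩
    set r := b - X *ᵥ ((Xᵀ * X)⁻¹ *ᵥ (Xᵀ *ᵥ b))
    have hr : r ∈ LinearMap.ker Xᵀ.mulVecLin := by
      rw [LinearMap.mem_ker, mulVecLin_apply, mulVec_sub, mulVec_mulVec, mulVec_mulVec,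
        mul_nonsing_inv _ hdet, one_mulVec, sub_self]
    have hrr : r ⬝ᵥ r = 0 := by rw [dotProduct_sub, hb r hr, orth r hr, sub_zero]
    exact sub_eq_zero.mp (dotProduct_self_eq_zero.mp hrr)

end Matrix

theorem linearIndependent_one_pair {ι R : Type*} [Fintype ι] [Nonempty ι] [Field R]
    [CharZero R] {t : ι → R} (ht : t ≠ 0) (ht1 : ∑ i, t i = 0) :
    LinearIndependent R ![1, t] := by
  rw [LinearIndependent.pair_iff]
  intro a b hab
  have ha : a = 0 := by
    have := congrArg (fun f => ∑ i, f i) hab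
    simpa [Finset.sum_add_distrib, ← Finset.mul_sum, ht1] using this
  subst ha
  simp only [zero_smul, zero_add, smul_eq_zero] at hab
  exact ⟨rfl, hab.resolve_right ht⟩

theorem forall_mem_span_pair_dotProduct_eq_zero_iff {m R : Type*} [Fintype m] [CommRing R]
    {p q b : m → R} :
    (∀ w ∈ Submodule.span R {p, q}, w ⬝ᵥ b = 0) ↔ p ⬝ᵥ b = 0 ∧ q ⬝ᵥ b = 0 := by
  refine ⟨fun h => ⟨h p (Submodule.subset_span (by simp)), h q (Submodule.subset_span (by simp))⟩,
    fun ⟨hp, hq⟩ w hw => ?_⟩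
  obtain ⟨a, c, rfl⟩ := Submodule.mem_span_pair.mp hw
  simp [add_dotProduct, hp, hq]

theorem sum_Bmat (x : Fin 5 → Fin 3 → ℝ) : ∑ i, Bmat x i = 0 := by
  set D := fun i => vecMulVec (x i) (x i) - (5 : ℝ)⁻¹ • ∑ j, vecMulVec (x j) (x j)
  have hD : ∑ i, D i = 0 := by
    simp only [D, Finset.sum_sub_distrib, Finset.sum_const, Finset.card_univ, Fintype.card_fin,
      ← Nat.cast_smul_eq_nsmul ℝ, smul_smul]
    norm_num
  calc ∑ i, Bmat x i = ∑ i, ((D i).trace • 1 - D i) := rfl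
    _ = (∑ i, D i).trace • 1 - ∑ i, D i := by
        rw [Finset.sum_sub_distrib, ← Finset.sum_smul, trace_sum]
    _ = 0 := by rw [hD, trace_zero, zero_smul, sub_zero]

theorem dotProduct_bvec (x : Fin 5 → Fin 3 → ℝ) (u : Fin 3 → ℝ) (w : Fin 5 → ℝ) :
    w ⬝ᵥ bvec x u = u ⬝ᵥ ((∑ i, w i • Bmat x i) *ᵥ u) := by
  simp only [sum_mulVec, dotProduct_sum, smul_mulVec, dotProduct_smul, smul_eq_mul]
  rfl

theorem system8_iff_system9_general (x : Fin 5 → Fin 3 → ℝ)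
    (hsum : ∑ i, x i = 0)
    (hspan : Submodule.span ℝ (Set.range x) = ⊤)
    (t : Fin 5 → ℝ) (ht : t ≠ 0)
    (htX : ∀ j : Fin 3, ∑ i, t i * x i j = 0)
    (ht1 : ∑ i, t i = 0)
    (u c : Fin 3 → ℝ) :
    ((∀ i : Fin 5, u ⬝ᵥ (Bmat x i *ᵥ u) = 2 * (c ⬝ᵥ x i)) ∧ c ⬝ᵥ u = 0) ↔
      (c = (2 : ℝ)⁻¹ • gammaVec x u ∧
        u ⬝ᵥ ((∑ i, t i • Bmat x i) *ᵥ u) = 0 ∧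
        u ⬝ᵥ gammaVec x u = 0) := by
  set X := Matrix.of x
  have hrange : LinearMap.range Xᵀ.mulVecLin = ⊤ := by
    rwa [range_mulVecLin, col_transpose]
  have hX1 : Xᵀ *ᵥ 1 = 0 := by
    simp only [mulVec_transpose, vecMul_eq_sum, Pi.one_apply, one_smul]
    exact hsum
  have hXt : Xᵀ *ᵥ t = 0 := by
    ext j
    simpa [X, mulVec_transpose, vecMul_eq_sum, Finset.sum_apply] using htX j
  have hker : LinearMap.ker Xᵀ.mulVecLin = Submodule.span ℝ {1, t} :=
    ker_mulVecLin_eq_span_pair hrange (by simp) hX1 hXt (linearIndependent_one_pair ht ht1)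
  have h8 : (∀ i, u ⬝ᵥ (Bmat x i *ᵥ u) = 2 * (c ⬝ᵥ x i)) ↔ bvec x u = X *ᵥ ((2 : ℝ) • c) := by
    rw [funext_iff]
    refine forall_congr' fun i => ?_
    rw [mulVec_smul, Pi.smul_apply, smul_eq_mul, dotProduct_comm c]
    rfl
  have hb1 : 1 ⬝ᵥ bvec x u = 0 := by
    rw [dotProduct_bvec]
    simp [sum_Bmat]
  have hcu : c = (2 : ℝ)⁻¹ • gammaVec x u → (c ⬝ᵥ u = 0 ↔ u ⬝ᵥ gammaVec x u = 0) := by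
    rintro rfl
    rw [smul_dotProduct, smul_eq_zero, dotProduct_comm]
    simp
  rw [h8, eq_mulVec_iff_of_isUnit_transpose_mul_self
      (isUnit_transpose_mul_self_of_range_eq_top hrange), hker, forall_mem_span_pair_dotProduct_eq_zero_iff, hb1, dotProduct_bvec x u t, ← gammaVec,
    ← eq_inv_smul_iff₀ two_ne_zero]
  constructor
  · rintro ⟨⟨hc, -, hM⟩, hcγ⟩
    exact ⟨hc, hM, (hcu hc).mp hcγ⟩
  · rintro ⟨hc, hM, huγ⟩
    exact ⟨⟨hc, rfl, hM⟩, (hcu hc).mpr huγ⟩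

/-- Theorem 3: for five centered points spanning `ℝ³`, a unit vector `u` and `c ∈ ℝ³`,
system (8) `uᵀBᵢu = 2⟨c,xᵢ⟩ (i = 1,…,5)`, `⟨c,u⟩ = 0` is equivalent to
system (9) `c = γ(u)/2`, `uᵀMu = 0`, `⟨u, γ(u)⟩ = 0`. -/
theorem system8_iff_system9 (x : Fin 5 → Fin 3 → ℝ)
    (hsum : ∑ i, x i = 0)
    (hspan : Submodule.span ℝ (Set.range x) = ⊤)
    (t : Fin 5 → ℝ) (ht : t ≠ 0)
    (htX : ∀ j : Fin 3, ∑ i, t i * x i j = 0)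
    (ht1 : ∑ i, t i = 0)
    (u c : Fin 3 → ℝ) (hu : u ⬝ᵥ u = 1) :
    ((∀ i : Fin 5, u ⬝ᵥ (Bmat x i *ᵥ u) = 2 * (c ⬝ᵥ x i)) ∧ c ⬝ᵥ u = 0) ↔
      (c = (2 : ℝ)⁻¹ • gammaVec x u ∧
        u ⬝ᵥ ((∑ i, t i • Bmat x i) *ᵥ u) = 0 ∧
        u ⬝ᵥ gammaVec x u = 0) :=
  system8_iff_system9_general x hsum hspan t ht htX ht1 u c
end

section
/- For the trigonal bipyramid with h > 0 and any unit vector u = (u₁,u₂,u₃) ∈ ℝ³, the two conditions uᵀMu = 0 and ⟨u, γ(u)⟩ = 0 (system (9)) hold simultaneously if and only if (2h²+1)(u₁² + u₂²) = 2 and u₁(u₁² − 3u₂²) = 0, where M = (1/√6)·diag(6h²−3, 6h²−3, −6) and γ(u) = ((u₂² − u₁²)/2, u₁u₂, 0). -/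
open Matrix

lemma dotProduct_self_fin_three {R : Type*} [CommRing R] (u : Fin 3 → R) :
    u ⬝ᵥ u = u 0 ^ 2 + u 1 ^ 2 + u 2 ^ 2 := by
  simp only [dotProduct, Fin.sum_univ_three, sq]

lemma dotProduct_diagonal_mulVec_fin_three {R : Type*} [CommRing R] (d u : Fin 3 → R) :
    u ⬝ᵥ (diagonal d *ᵥ u) = d 0 * u 0 ^ 2 + d 1 * u 1 ^ 2 + d 2 * u 2 ^ 2 := by
  simp only [dotProduct, mulVec_diagonal, Fin.sum_univ_three]
  ring

lemma dotProduct_bipyramid_gamma (u : Fin 3 → ℝ) :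
    u ⬝ᵥ ![(u 1 ^ 2 - u 0 ^ 2) / 2, u 0 * u 1, 0] = -(u 0 * (u 0 ^ 2 - 3 * u 1 ^ 2)) / 2 := by
  simp only [dotProduct, Fin.sum_univ_three, cons_val_zero, cons_val_one, cons_val_two,
    head_cons, tail_cons]
  ring

/-- On the unit sphere `u₂² = 1 − (u₀² + u₁²)`, so the quadratic form of `M` is
`(3/√6)·((2h² + 1)(u₀² + u₁²) − 2)`. -/
lemma bipyramid_quadForm_eq_zero_iff (h : ℝ) (u : Fin 3 → ℝ) (hu : u ⬝ᵥ u = 1) :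
    u ⬝ᵥ (((Real.sqrt 6)⁻¹ • diagonal ![6 * h ^ 2 - 3, 6 * h ^ 2 - 3, -6]) *ᵥ u) = 0 ↔
      (2 * h ^ 2 + 1) * (u 0 ^ 2 + u 1 ^ 2) = 2 := by
  rw [dotProduct_self_fin_three] at hu
  have hform : u ⬝ᵥ (diagonal ![6 * h ^ 2 - 3, 6 * h ^ 2 - 3, -6] *ᵥ u) =
      3 * ((2 * h ^ 2 + 1) * (u 0 ^ 2 + u 1 ^ 2) - 2) := by
    rw [dotProduct_diagonal_mulVec_fin_three]
    simp only [cons_val_zero, cons_val_one, cons_val_two, head_cons, tail_cons]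
    linear_combination -6 * hu
  rw [smul_mulVec, dotProduct_smul, hform, smul_eq_mul, mul_eq_zero,
    or_iff_right (by positivity), mul_eq_zero, or_iff_right three_ne_zero, sub_eq_zero]

theorem bipyramid_system9_iff_general (h : ℝ) (u : Fin 3 → ℝ) (hu : u ⬝ᵥ u = 1) :
    (u ⬝ᵥ (((Real.sqrt 6)⁻¹ •
          Matrix.diagonal ![6 * h ^ 2 - 3, 6 * h ^ 2 - 3, -6]) *ᵥ u) = 0 ∧
        u ⬝ᵥ ![(u 1 ^ 2 - u 0 ^ 2) / 2, u 0 * u 1, 0] = 0) ↔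
      ((2 * h ^ 2 + 1) * (u 0 ^ 2 + u 1 ^ 2) = 2 ∧
        u 0 * (u 0 ^ 2 - 3 * u 1 ^ 2) = 0) := by
  rw [bipyramid_quadForm_eq_zero_iff h u hu, dotProduct_bipyramid_gamma, div_eq_zero_iff,
    neg_eq_zero, or_iff_left two_ne_zero]

/-- For the trigonal bipyramid with `h > 0` and a unit vector `u`, system (9)
`uᵀMu = 0 ∧ ⟨u, γ(u)⟩ = 0`, with `M = (1/√6)·diag(6h²−3, 6h²−3, −6)` and
`γ(u) = ((u₂² − u₁²)/2, u₁u₂, 0)`, holds iff `(2h²+1)(u₁² + u₂²) = 2` and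
`u₁(u₁² − 3u₂²) = 0`. -/
theorem bipyramid_system9_iff (h : ℝ) (h0 : 0 < h) (u : Fin 3 → ℝ) (hu : u ⬝ᵥ u = 1) :
    (u ⬝ᵥ (((Real.sqrt 6)⁻¹ •
          Matrix.diagonal ![6 * h ^ 2 - 3, 6 * h ^ 2 - 3, -6]) *ᵥ u) = 0 ∧
        u ⬝ᵥ ![(u 1 ^ 2 - u 0 ^ 2) / 2, u 0 * u 1, 0] = 0) ↔
      ((2 * h ^ 2 + 1) * (u 0 ^ 2 + u 1 ^ 2) = 2 ∧
        u 0 * (u 0 ^ 2 - 3 * u 1 ^ 2) = 0) :=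
  bipyramid_system9_iff_general h u hu
end
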